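/- arXiv:0907.0449 — 2 statements merged into one kernel-verified Lean document; each statement's English description precedes it below -/
import Mathlib

section
/- For the cavity process, for every T ≥ 0 the covariance matrix C_T = {C(t,s)}_{t,s≤T} is strictly positive definite, and every trajectory has positive probability: P(σ_0^T = ω_0^T) > 0 for each ω_0^T ∈ {−1,+1}^{T+1}. -/
open MeasureTheory ProbabilityTheory

/-- Standard Gaussian measure on ℝ^n. -/
noncomputable def stdGaussian (n : ℕ) : Measure (Fin n → ℝ) :=
  Measure.pi fun _ => gaussianReal 0 1

/-- Sample space of the effective process: a uniform ±1 sign (for σ(0)) together with an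
n-dimensional standard Gaussian vector (used to produce η with covariance C = A Aᵀ). -/
noncomputable def effMeasure (n : ℕ) : Measure (Bool × (Fin n → ℝ)) :=
  ((PMF.uniformOfFintype Bool).toMeasure).prod (stdGaussian n)

/-- The effective process: σ(0) uniform ±1, η(t) = (A g)(t) with g standard Gaussian
(so η is centered Gaussian with covariance A Aᵀ), and
σ(t+1) = sign(η(t) + Σ_{s<t} R(t,s) σ(s) + h(t)). -/
noncomputable def effTraj (n : ℕ) (A : Matrix (Fin n) (Fin n) ℝ) (R : ℕ → ℕ → ℝ)
    (h : ℕ → ℝ) (ω : Bool × (Fin n → ℝ)) : ℕ → ℝ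
  | 0 => if ω.1 then 1 else -1
  | t + 1 =>
      Real.sign ((if ht : t < n then ∑ j, A ⟨t, ht⟩ j * ω.2 j else 0)
        + (∑ s ∈ (Finset.range t).attach, R t s.1 * effTraj n A R h ω s.1) + h t)
  decreasing_by exact Nat.lt_succ_of_lt (Finset.mem_range.mp s.2)

/-- `IsCavityPair C R T` : (C,R) satisfy the defining self-consistency equations of the
cavity process up to time T: C is a symmetric positive semidefinite correlation function
with C(t,t)=1, R(t,s)=0 for t ≤ s, and for every matrix A with A Aᵀ = C_T (so that the
effective process built from A has Gaussian field of covariance C_T):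
C(t,s) = E[σ(t)σ(s)] for t,s ≤ T, and R(t,s) = ∂_{h(s)} E_{C,R,h}[σ(t)] |_{h=0}
for s < t ≤ T. -/
def IsCavityPair (C R : ℕ → ℕ → ℝ) (T : ℕ) : Prop :=
  (∀ t ≤ T, C t t = 1) ∧
  (∀ s ≤ T, ∀ t ≤ T, C t s = C s t) ∧
  (∀ a : Fin (T + 1) → ℝ, 0 ≤ ∑ t, ∑ s, a t * C t.1 s.1 * a s) ∧
  (∀ t s, t ≤ s → R t s = 0) ∧
  ∀ A : Matrix (Fin (T + 1)) (Fin (T + 1)) ℝ,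
    (∀ t s : Fin (T + 1), (A * A.transpose) t s = C t.1 s.1) →
    (∀ t ≤ T, ∀ s ≤ T,
      C t s = ∫ ω, effTraj (T + 1) A R (fun _ => 0) ω t *
        effTraj (T + 1) A R (fun _ => 0) ω s ∂ effMeasure (T + 1)) ∧
    (∀ s t, t ≤ T → s < t →
      HasDerivAt (fun x : ℝ =>
        ∫ ω, effTraj (T + 1) A R (fun u => if u = s then x else 0) ω t
          ∂ effMeasure (T + 1)) (R t s) 0)

/-!
Along the trajectory, σ(t+1) is the sign of the Gaussian field η(t) plus a drift that depends only
on σ(0), …, σ(t). If the covariance of (η(0), …, η(T-1)) is nondegenerate, these fields can take any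
prescribed value, so the set of Gaussian inputs producing a given sign pattern ω contains a nonempty
open set and has positive probability. Conversely, if every pattern has positive probability, then
aᵀ C_T a = E[(Σ a_t σ_t)²] is positive for a ≠ 0, as witnessed by the pattern σ = sign a. Starting
from the empty matrix C_{-1}, the two implications alternate by induction on T.
-/

open Matrix

lemma Real.measurable_sign : Measurable Real.sign :=
  Measurable.ite (measurableSet_lt measurable_id measurable_const) measurable_const <|
    Measurable.ite (measurableSet_lt measurable_const measurable_id) measurable_const
      measurable_const

lemma Real.abs_sign_le_one (x : ℝ) : |Real.sign x| ≤ 1 := by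
  rcases Real.sign_apply_eq x with h | h | h <;> simp [h]

lemma Real.sign_eq_of_pos_mul {ε y : ℝ} (hε : ε = 1 ∨ ε = -1) (h : 0 < ε * y) :
    Real.sign y = ε := by
  rcases hε with rfl | rfl
  · exact Real.sign_of_pos (by linarith)
  · exact Real.sign_of_neg (by linarith)

lemma Matrix.dotProduct_mulVec_self_eq_sum {ι R : Type*} [Fintype ι] [CommSemiring R]
    (M : Matrix ι ι R) (x : ι → R) :
    x ⬝ᵥ M *ᵥ x = ∑ t, ∑ s, x t * M t s * x s := by
  simp only [dotProduct, mulVec, Finset.mul_sum, mul_assoc]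

lemma Matrix.mulVec_surjective_of_isUnit_mul_transpose {m n R : Type*} [Fintype m]
    [DecidableEq m] [Fintype n] [CommRing R] (B : Matrix m n R) (hB : IsUnit (B * Bᵀ)) :
    Function.Surjective B.mulVec := by
  obtain ⟨G, hG⟩ := mulVec_surjective_iff_exists_right_inverse.mp
    (mulVec_surjective_iff_isUnit.mpr hB)
  exact mulVec_surjective_iff_exists_right_inverse.mpr ⟨Bᵀ * G, by rw [← Matrix.mul_assoc, hG]⟩

open scoped MatrixOrder in
lemma Matrix.PosSemidef.exists_mul_transpose_eq {ι : Type*} [Fintype ι] [DecidableEq ι]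
    {M : Matrix ι ι ℝ} (hM : M.PosSemidef) : ∃ A : Matrix ι ι ℝ, A * Aᵀ = M := by
  obtain ⟨B, rfl⟩ := CStarAlgebra.nonneg_iff_eq_star_mul_self.mp hM.nonneg
  exact ⟨Bᵀ, by simp [Matrix.star_eq_conjTranspose]⟩

lemma isOpenPosMeasure_gaussianReal (μ : ℝ) {v : NNReal} (hv : v ≠ 0) :
    (gaussianReal μ v).IsOpenPosMeasure where
  open_pos _ hU hne h0 :=
    (hU.measure_pos volume hne).ne' (gaussianReal_absolutelyContinuous' μ hv h0)

instance (n : ℕ) : (_root_.stdGaussian n).IsOpenPosMeasure :=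
  haveI := isOpenPosMeasure_gaussianReal 0 one_ne_zero
  inferInstanceAs (Measure.pi _).IsOpenPosMeasure

instance (n : ℕ) : IsProbabilityMeasure (_root_.stdGaussian n) := by
  unfold _root_.stdGaussian; infer_instance

instance (n : ℕ) : IsProbabilityMeasure (effMeasure n) := by
  unfold effMeasure; infer_instance

lemma effMeasure_singleton_prod_pos (n : ℕ) (b : Bool) {U : Set (Fin n → ℝ)} (hU : IsOpen U)
    (hne : U.Nonempty) : 0 < effMeasure n ({b} ×ˢ U) := by
  rw [effMeasure, Measure.prod_prod]
  refine ENNReal.mul_pos ?_ (hU.measure_pos _ hne).ne'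
  simp [PMF.toMeasure_apply_singleton _ b (measurableSet_singleton b)]

def effField (n : ℕ) (A : Matrix (Fin n) (Fin n) ℝ) (g : Fin n → ℝ) (t : ℕ) : ℝ :=
  if ht : t < n then (A *ᵥ g) ⟨t, ht⟩ else 0

lemma continuous_effField (n : ℕ) (A : Matrix (Fin n) (Fin n) ℝ) (t : ℕ) :
    Continuous fun g => effField n A g t := by
  unfold effField
  split
  · exact (continuous_apply _).comp (continuous_const.matrix_mulVec continuous_id)
  · exact continuous_const

section effTraj

variable (n : ℕ) (A : Matrix (Fin n) (Fin n) ℝ) (R : ℕ → ℕ → ℝ) (h : ℕ → ℝ)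

lemma effTraj_zero (ω : Bool × (Fin n → ℝ)) :
    effTraj n A R h ω 0 = if ω.1 then 1 else -1 := by
  rw [effTraj]

lemma effTraj_succ (ω : Bool × (Fin n → ℝ)) (t : ℕ) :
    effTraj n A R h ω (t + 1) = Real.sign
      (effField n A ω.2 t + ∑ s ∈ Finset.range t, R t s * effTraj n A R h ω s + h t) := by
  rw [effTraj, Finset.sum_attach (Finset.range t) fun s => R t s * effTraj n A R h ω s]
  exact rfl

lemma abs_effTraj_le_one (ω : Bool × (Fin n → ℝ)) (t : ℕ) : |effTraj n A R h ω t| ≤ 1 := by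
  cases t with
  | zero => rw [effTraj_zero]; split <;> norm_num
  | succ t => rw [effTraj_succ]; exact Real.abs_sign_le_one _

lemma measurable_effTraj (t : ℕ) : Measurable fun ω => effTraj n A R h ω t := by
  induction t using Nat.strong_induction_on with
  | _ t ih =>
    cases t with
    | zero =>
      simp only [effTraj_zero]
      exact Measurable.ite (measurable_fst (measurableSet_singleton true)) measurable_const
        measurable_const
    | succ t =>
      simp only [effTraj_succ]
      refine Real.measurable_sign.comp (.add (.add ?_ ?_) measurable_const)
      · exact (continuous_effField n A t).measurable.comp measurable_snd
      · exact Finset.measurable_sum _ fun s hs =>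
          measurable_const.mul (ih s (Nat.lt_succ_of_lt (Finset.mem_range.mp hs)))

lemma integrable_effTraj_mul (t s : ℕ) :
    Integrable (fun ω => effTraj n A R h ω t * effTraj n A R h ω s) (effMeasure n) := by
  refine .of_bound ((measurable_effTraj n A R h t).mul
    (measurable_effTraj n A R h s)).aestronglyMeasurable 1 (ae_of_all _ fun ω => ?_)
  rw [Real.norm_eq_abs, abs_mul]
  exact mul_le_one₀ (abs_effTraj_le_one n A R h ω t) (abs_nonneg _)
    (abs_effTraj_le_one n A R h ω s)

variable {n A R h}

lemma effTraj_eq_of_sign_eq {ω : Bool × (Fin n → ℝ)} {ε : ℕ → ℝ} {T : ℕ}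
    (h0 : (if ω.1 then 1 else -1) = ε 0)
    (hstep : ∀ t < T,
      Real.sign (effField n A ω.2 t + ∑ s ∈ Finset.range t, R t s * ε s + h t) = ε (t + 1)) :
    ∀ t ≤ T, effTraj n A R h ω t = ε t := by
  intro t
  induction t using Nat.strong_induction_on with
  | _ t ih =>
    cases t with
    | zero => intro _; rw [effTraj_zero, h0]
    | succ t =>
      intro ht
      rw [effTraj_succ, ← hstep t ht]
      congr 3
      refine Finset.sum_congr rfl fun s hs => ?_
      have hst := Finset.mem_range.mp hs
      rw [ih s (by omega) (by omega)]

lemma effMeasure_setOf_effTraj_eq_pos {T : ℕ}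
    (hfield : ∀ v : ℕ → ℝ, ∃ g, ∀ t < T, effField n A g t = v t)
    {ε : ℕ → ℝ} (hε : ∀ t ≤ T, ε t = 1 ∨ ε t = -1) :
    0 < effMeasure n {ω | ∀ t ≤ T, effTraj n A R h ω t = ε t} := by
  set U := {g : Fin n → ℝ | ∀ t < T,
    0 < ε (t + 1) * (effField n A g t + ∑ s ∈ Finset.range t, R t s * ε s + h t)}
  have hU : IsOpen U := by
    simp only [U, Set.ofPred_forall]
    exact (Set.finite_Iio T).isOpen_biInter fun t _ =>
      isOpen_lt continuous_const (continuous_const.mul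
        (((continuous_effField n A t).add continuous_const).add continuous_const))
  obtain ⟨g₀, hg₀⟩ := hfield fun t => ε (t + 1) - ∑ s ∈ Finset.range t, R t s * ε s - h t
  have hg₀U : g₀ ∈ U := fun t ht => by
    rw [hg₀ t ht, sub_sub, add_assoc, sub_add_cancel]
    rcases hε (t + 1) ht with h1 | h1 <;> rw [h1] <;> norm_num
  refine (effMeasure_singleton_prod_pos n (decide (ε 0 = 1)) hU ⟨g₀, hg₀U⟩).trans_le
    (measure_mono ?_)
  rintro ⟨b, g⟩ ⟨hb, hg⟩
  refine effTraj_eq_of_sign_eq ?_ fun t ht => Real.sign_eq_of_pos_mul (hε _ ht) (hg t ht)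
  rw [Set.mem_singleton_iff.mp hb]
  rcases hε 0 T.zero_le with h0 | h0 <;> norm_num [h0]

end effTraj

section SignPatterns

variable {Ω ι : Type*} [MeasurableSpace Ω] [Fintype ι] {μ : Measure Ω} {X : ι → Ω → ℝ}

lemma sq_sum_mul_eq (a x : ι → ℝ) :
    (∑ t, a t * x t) ^ 2 = ∑ t, ∑ s, a t * a s * (x t * x s) := by
  rw [sq, Finset.sum_mul_sum]
  exact Finset.sum_congr rfl fun t _ => Finset.sum_congr rfl fun s _ => by ring

lemma integrable_sq_sum_mul (hX : ∀ t s, Integrable (fun ω => X t ω * X s ω) μ) (a : ι → ℝ) :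
    Integrable (fun ω => (∑ t, a t * X t ω) ^ 2) μ := by
  simp only [sq_sum_mul_eq]
  exact integrable_finsetSum _ fun t _ => integrable_finsetSum _ fun s _ => (hX t s).const_mul _

lemma integral_sq_sum_mul (hX : ∀ t s, Integrable (fun ω => X t ω * X s ω) μ) (a : ι → ℝ) :
    ∫ ω, (∑ t, a t * X t ω) ^ 2 ∂μ = ∑ t, ∑ s, a t * (∫ ω, X t ω * X s ω ∂μ) * a s := by
  simp only [sq_sum_mul_eq]
  rw [integral_finsetSum _ fun t _ => integrable_finsetSum _ fun s _ => (hX t s).const_mul _]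
  refine Finset.sum_congr rfl fun t _ => ?_
  rw [integral_finsetSum _ fun s _ => (hX t s).const_mul _]
  refine Finset.sum_congr rfl fun s _ => ?_
  rw [integral_const_mul]
  ring

lemma integral_sq_sum_mul_pos {a : ι → ℝ} (ha : a ≠ 0)
    (hint : Integrable (fun ω => (∑ t, a t * X t ω) ^ 2) μ)
    (hpos : ∀ ε : ι → ℝ, (∀ t, ε t = 1 ∨ ε t = -1) → 0 < μ {ω | ∀ t, X t ω = ε t}) :
    0 < ∫ ω, (∑ t, a t * X t ω) ^ 2 ∂μ := by
  set ε : ι → ℝ := fun t => if 0 ≤ a t then 1 else -1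
  have hε : ∀ t, ε t = 1 ∨ ε t = -1 := fun t => by
    by_cases ht : 0 ≤ a t <;> simp [ε, ht]
  have haε : ∑ t, a t * ε t = ∑ t, |a t| := Finset.sum_congr rfl fun t _ => by
    by_cases ht : 0 ≤ a t
    · simp [ε, ht, abs_of_nonneg ht]
    · simp [ε, ht, abs_of_neg (not_le.mp ht)]
  have habs : 0 < ∑ t, |a t| := by
    obtain ⟨t, ht⟩ := Function.ne_iff.mp ha
    exact Finset.sum_pos' (fun t _ => abs_nonneg _) ⟨t, Finset.mem_univ _, abs_pos.mpr ht⟩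
  rw [integral_pos_iff_support_of_nonneg (fun ω => sq_nonneg _) hint]
  refine (hpos ε hε).trans_le (measure_mono fun ω hω => ?_)
  have hXε : ∀ t, X t ω = ε t := hω
  simp only [Function.mem_support, hXε, haε]
  exact (pow_pos habs 2).ne'

end SignPatterns

section Cavity

variable {C R : ℕ → ℕ → ℝ}

lemma exists_effField_eq_of_quadForm_pos {n T : ℕ} (hT : T ≤ n) {A : Matrix (Fin n) (Fin n) ℝ}
    (hA : ∀ t s : Fin n, (A * Aᵀ) t s = C t.1 s.1)
    (hpd : ∀ a : Fin T → ℝ, a ≠ 0 → 0 < ∑ t, ∑ s, a t * C t.1 s.1 * a s) (v : ℕ → ℝ) :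
    ∃ g, ∀ t < T, effField n A g t = v t := by
  set B := A.submatrix (Fin.castLE hT) id
  have hBC : ∀ t s, (B * Bᵀ) t s = C t.1 s.1 := fun t s => hA (Fin.castLE hT t) (Fin.castLE hT s)
  have hB : (B * Bᵀ).PosDef := .of_dotProduct_mulVec_pos
    (by simpa using B.isHermitian_mul_conjTranspose_self) fun x hx => by
      simpa only [star_trivial, dotProduct_mulVec_self_eq_sum, hBC] using hpd x hx
  obtain ⟨g, hg⟩ := B.mulVec_surjective_of_isUnit_mul_transpose hB.isUnit fun t => v t
  exact ⟨g, fun t ht => by rw [effField, dif_pos (ht.trans_le hT)]; exact congrFun hg ⟨t, ht⟩⟩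

lemma effMeasure_trajectory_pos_of_quadForm_pos {T : ℕ}
    (hpd : ∀ a : Fin T → ℝ, a ≠ 0 → 0 < ∑ t, ∑ s, a t * C t.1 s.1 * a s)
    (A : Matrix (Fin (T + 1)) (Fin (T + 1)) ℝ) (hA : ∀ t s : Fin (T + 1), (A * Aᵀ) t s = C t.1 s.1)
    (ωtr : Fin (T + 1) → ℝ) (hω : ∀ t, ωtr t = 1 ∨ ωtr t = -1) :
    0 < effMeasure (T + 1)
      {ω | ∀ t : Fin (T + 1), effTraj (T + 1) A R (fun _ => 0) ω t.1 = ωtr t} := by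
  have hset : {ω | ∀ t : Fin (T + 1), effTraj (T + 1) A R (fun _ => 0) ω t.1 = ωtr t} =
      {ω | ∀ t ≤ T, effTraj (T + 1) A R (fun _ => 0) ω t = ωtr (Fin.ofNat (T + 1) t)} := by
    ext ω
    simp only [Set.mem_ofPred_eq, Fin.forall_iff, Nat.lt_succ_iff]
    exact forall₂_congr fun t ht => by
      rw [show Fin.ofNat (T + 1) t = ⟨t, _⟩ from Fin.ext (Nat.mod_eq_of_lt (Nat.lt_succ_of_le ht))]
  rw [hset]
  exact effMeasure_setOf_effTraj_eq_pos (exists_effField_eq_of_quadForm_pos T.le_succ hA hpd)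
    fun t _ => hω _

lemma quadForm_pos_of_effMeasure_trajectory_pos {T : ℕ} (hcav : IsCavityPair C R T)
    (htraj : ∀ A : Matrix (Fin (T + 1)) (Fin (T + 1)) ℝ,
      (∀ t s : Fin (T + 1), (A * Aᵀ) t s = C t.1 s.1) →
      ∀ ωtr : Fin (T + 1) → ℝ, (∀ t, ωtr t = 1 ∨ ωtr t = -1) →
        0 < effMeasure (T + 1)
          {ω | ∀ t : Fin (T + 1), effTraj (T + 1) A R (fun _ => 0) ω t.1 = ωtr t})
    {a : Fin (T + 1) → ℝ} (ha : a ≠ 0) : 0 < ∑ t, ∑ s, a t * C t.1 s.1 * a s := by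
  obtain ⟨-, hsymm, hpsd, -, hcov⟩ := hcav
  have hM : (Matrix.of fun t s : Fin (T + 1) => C t s).PosSemidef :=
    .of_dotProduct_mulVec_nonneg
      (.ext fun t s => hsymm t (Fin.is_le t) s (Fin.is_le s)) fun x => by
        simpa only [star_trivial, dotProduct_mulVec_self_eq_sum, Matrix.of_apply] using hpsd x
  obtain ⟨A, hA⟩ := hM.exists_mul_transpose_eq
  have hAC : ∀ t s : Fin (T + 1), (A * Aᵀ) t s = C t.1 s.1 := fun t s => by rw [hA, Matrix.of_apply]
  set X : Fin (T + 1) → Bool × (Fin (T + 1) → ℝ) → ℝ :=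
    fun t ω => effTraj (T + 1) A R (fun _ => 0) ω t
  have hX : ∀ t s, Integrable (fun ω => X t ω * X s ω) (effMeasure (T + 1)) :=
    fun t s => integrable_effTraj_mul _ _ _ _ _ _
  have hCX : ∑ t, ∑ s, a t * C t.1 s.1 * a s = ∫ ω, (∑ t, a t * X t ω) ^ 2 ∂effMeasure (T + 1) := by
    rw [integral_sq_sum_mul hX]
    congr! 5 with t _ s _
    exact (hcov A hAC).1 t (Fin.is_le t) s (Fin.is_le s)
  rw [hCX]
  exact integral_sq_sum_mul_pos ha (integrable_sq_sum_mul hX a) (htraj A hAC)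

end Cavity

/-- for the cavity process, every covariance matrix C_T is strictly
positive definite, and every spin trajectory ω ∈ {±1}^{T+1} has strictly positive
probability under the cavity process. -/
theorem cavity_nondegenerate (C R : ℕ → ℕ → ℝ) (hcav : ∀ T, IsCavityPair C R T)
    (T : ℕ) :
    (∀ a : Fin (T + 1) → ℝ, a ≠ 0 → 0 < ∑ t, ∑ s, a t * C t.1 s.1 * a s) ∧
    (∀ A : Matrix (Fin (T + 1)) (Fin (T + 1)) ℝ,
      (∀ t s : Fin (T + 1), (A * A.transpose) t s = C t.1 s.1) →
      ∀ ωtr : Fin (T + 1) → ℝ, (∀ t, ωtr t = 1 ∨ ωtr t = -1) →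
        0 < effMeasure (T + 1)
          {ω | ∀ t : Fin (T + 1), effTraj (T + 1) A R (fun _ => 0) ω t.1 = ωtr t}) := by
  have hpd : ∀ T, ∀ a : Fin T → ℝ, a ≠ 0 → 0 < ∑ t, ∑ s, a t * C t.1 s.1 * a s := by
    intro T
    induction T with
    | zero => exact fun a ha => absurd (Subsingleton.elim a 0) ha
    | succ T ih =>
      exact fun _ => quadForm_pos_of_effMeasure_trajectory_pos (hcav T)
        (effMeasure_trajectory_pos_of_quadForm_pos ih)
  exact ⟨hpd (T + 1), effMeasure_trajectory_pos_of_quadForm_pos (hpd T)⟩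
end

section
/- The cavity process on the alternate-time (bipartite) structure satisfies: C(t,s) = 0 whenever t and s have different parity, and R(t,s) = 0 whenever t and s have the same parity. -/
open MeasureTheory ProbabilityTheory

/-! Induction on the horizon `T`. If the parity structure holds below `T`, the rows `u < T` of a
factor `A` of `C_T = A Aᵀ` split into two mutually orthogonal families (even and odd `u`), so a
reflection yields a second factor `A'` of `C_T` whose rows are `(-1) ^ u` times those of `A`.
As responses only couple opposite parities, the process driven by `A'` from the flipped initial
spin is exactly `(-1) ^ (t + 1) σ(t)`, and flipping `σ(0)` preserves the law. Hence
`C(t,s) = (-1) ^ (t + s) C(t,s)` and `R(T,s) = (-1) ^ (T + s + 1) R(T,s)`. -/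

open scoped InnerProductSpace Matrix

theorem integral_effMeasure_flip (n : ℕ) (F : Bool × (Fin n → ℝ) → ℝ) :
    ∫ ω, F (!ω.1, ω.2) ∂effMeasure n = ∫ ω, F ω ∂effMeasure n := by
  have hnot : MeasurePreserving not (PMF.uniformOfFintype Bool).toMeasure
      (PMF.uniformOfFintype Bool).toMeasure := by
    refine ⟨measurable_of_countable _, ?_⟩
    rw [PMF.toMeasure_map _ _ (measurable_of_countable _)]
    congr 1
    ext b
    cases b <;> simp [PMF.map_apply, PMF.uniformOfFintype_apply]
  have : IsProbabilityMeasure (_root_.stdGaussian n) := by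
    unfold _root_.stdGaussian; infer_instance
  have hemb : MeasurableEmbedding (Prod.map not id : Bool × (Fin n → ℝ) → _) :=
    (MeasurableEquiv.prodCongr
      ⟨Equiv.boolNot, measurable_of_countable _, measurable_of_countable _⟩
      (MeasurableEquiv.refl _)).measurableEmbedding
  exact (hnot.prod (MeasurePreserving.id _)).integral_comp hemb F

theorem exists_linearIsometryEquiv_eq_neg_and_eq_self {𝕜 E : Type*} [RCLike 𝕜]
    [NormedAddCommGroup E] [InnerProductSpace 𝕜 E] [FiniteDimensional 𝕜 E] {s t : Set E}
    (hst : ∀ x ∈ s, ∀ y ∈ t, ⟪x, y⟫_𝕜 = 0) :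
    ∃ Φ : E ≃ₗᵢ[𝕜] E, (∀ x ∈ s, Φ x = -x) ∧ ∀ y ∈ t, Φ y = y :=
  ⟨(Submodule.span 𝕜 t).reflection,
    fun _ hx => Submodule.reflection_mem_subspace_orthogonalComplement_eq_neg
      (Submodule.isOrtho_span.mpr hst (Submodule.subset_span hx)),
    fun _ hy => Submodule.reflection_mem_subspace_eq_self (Submodule.subset_span hy)⟩

theorem Matrix.mul_transpose_self_apply_eq_inner {m n : Type*} [Fintype n] (A : Matrix m n ℝ)
    (u v : m) : (A * Aᵀ) u v = ⟪WithLp.toLp 2 (A u), WithLp.toLp 2 (A v)⟫_ℝ := by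
  rw [EuclideanSpace.inner_toLp_toLp, star_trivial, dotProduct_comm]
  rfl

theorem Matrix.exists_mul_transpose_self_eq_of_neg_rows {m n : Type*} [Fintype n]
    (A : Matrix m n ℝ) {S S' : Set m} (h : ∀ u ∈ S, ∀ v ∈ S', (A * Aᵀ) u v = 0) :
    ∃ A' : Matrix m n ℝ, A' * A'ᵀ = A * Aᵀ ∧ (∀ u ∈ S, A' u = -A u) ∧ ∀ v ∈ S', A' v = A v := by
  set x : m → EuclideanSpace ℝ n := fun u => WithLp.toLp 2 (A u)
  obtain ⟨Φ, hneg, hfix⟩ := exists_linearIsometryEquiv_eq_neg_and_eq_self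
    (s := x '' S) (t := x '' S') (by
      rintro _ ⟨u, hu, rfl⟩ _ ⟨v, hv, rfl⟩
      rw [← A.mul_transpose_self_apply_eq_inner]
      exact h u hu v hv)
  refine ⟨Matrix.of fun u => WithLp.ofLp (Φ (x u)), ?_, fun u hu => ?_, fun v hv => ?_⟩
  · ext u v
    rw [Matrix.mul_transpose_self_apply_eq_inner, Matrix.mul_transpose_self_apply_eq_inner]
    exact Φ.inner_map_map (x u) (x v)
  · change WithLp.ofLp (Φ (x u)) = _
    rw [hneg _ ⟨u, hu, rfl⟩]
    rfl
  · change WithLp.ofLp (Φ (x v)) = _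
    rw [hfix _ ⟨v, hv, rfl⟩]

theorem Real.sign_neg_one_pow_mul (k : ℕ) (x : ℝ) :
    Real.sign ((-1) ^ k * x) = (-1) ^ k * Real.sign x := by
  rcases neg_one_pow_eq_or ℝ k with h | h <;> simp [h, Real.sign_neg]

theorem effTraj_flip {n T : ℕ} {A A' : Matrix (Fin n) (Fin n) ℝ} {R : ℕ → ℕ → ℝ}
    {h h' : ℕ → ℝ}
    (hA : ∀ u : Fin n, u.1 < T → A' u = (-1 : ℝ) ^ u.1 • A u)
    (hh : ∀ u < T, h' u = (-1) ^ u * h u)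
    (hR : ∀ u < T, ∀ v < u, u % 2 = v % 2 → R u v = 0) (ω : Bool × (Fin n → ℝ)) :
    ∀ t ≤ T, effTraj n A' R h' (!ω.1, ω.2) t = (-1) ^ (t + 1) * effTraj n A R h ω t := by
  intro t
  induction t using Nat.strong_induction_on with
  | _ t ih =>
  intro ht
  cases t with
  | zero => cases hb : ω.1 <;> simp [effTraj, hb]
  | succ t =>
    have htT : t < T := ht
    have hfield : (if ht : t < n then ∑ j, A' ⟨t, ht⟩ j * ω.2 j else 0)
        = (-1) ^ t * if ht : t < n then ∑ j, A ⟨t, ht⟩ j * ω.2 j else 0 := by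
      split_ifs with htn
      · simp only [hA ⟨t, htn⟩ htT, Pi.smul_apply, smul_eq_mul, Finset.mul_sum, mul_assoc]
      · rw [mul_zero]
    -- responses between sites of equal parity vanish, and the others carry the sign `(-1) ^ t`
    have hmemory : ∑ s ∈ (Finset.range t).attach, R t s.1 * effTraj n A' R h' (!ω.1, ω.2) s.1
        = (-1) ^ t * ∑ s ∈ (Finset.range t).attach, R t s.1 * effTraj n A R h ω s.1 := by
      rw [Finset.mul_sum]
      refine Finset.sum_congr rfl fun s _ => ?_
      have hs : s.1 < t := Finset.mem_range.mp s.2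
      rw [ih s.1 (by omega) (by omega)]
      by_cases hpar : t % 2 = s.1 % 2
      · simp [hR t htT s.1 hs hpar]
      · rw [neg_one_pow_congr (R := ℝ) (m := s.1 + 1) (n := t)
          (by simp only [Nat.even_iff]; omega)]
        ring
    rw [effTraj, effTraj, hfield, hmemory, hh t htT, ← mul_add, ← mul_add,
      Real.sign_neg_one_pow_mul, pow_add _ (t + 1), pow_succ]
    ring

namespace IsCavityPair

variable {C R : ℕ → ℕ → ℝ} {T : ℕ}

open scoped MatrixOrder in
theorem exists_factor (hcav : IsCavityPair C R T) :
    ∃ A : Matrix (Fin (T + 1)) (Fin (T + 1)) ℝ, ∀ t s : Fin (T + 1), (A * Aᵀ) t s = C t s := by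
  obtain ⟨-, hsymm, hnonneg, -⟩ := hcav
  have hpsd : (Matrix.of fun t s : Fin (T + 1) => C t s).PosSemidef := by
    refine Matrix.posSemidef_iff_dotProduct_mulVec.mpr ⟨?_, fun a => ?_⟩
    · ext t s
      simp only [Matrix.conjTranspose_apply, star_trivial, Matrix.of_apply]
      exact hsymm _ (Nat.lt_succ_iff.mp t.2) _ (Nat.lt_succ_iff.mp s.2)
    · refine (hnonneg a).trans_eq ?_
      simp only [dotProduct, Matrix.mulVec, Pi.star_apply, star_trivial, Matrix.of_apply,
        Finset.mul_sum]
      exact Finset.sum_congr rfl fun t _ => Finset.sum_congr rfl fun s _ => by ring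
  obtain ⟨B, hB⟩ := CStarAlgebra.nonneg_iff_eq_star_mul_self.mp hpsd.nonneg
  refine ⟨Bᵀ, fun t s => ?_⟩
  rw [Matrix.transpose_transpose, ← Matrix.conjTranspose_eq_transpose_of_trivial,
    ← Matrix.star_eq_conjTranspose, ← hB, Matrix.of_apply]

theorem exists_flipped_factors (hcav : IsCavityPair C R T)
    (hC : ∀ t < T, ∀ s < T, t % 2 ≠ s % 2 → C t s = 0) :
    ∃ A A' : Matrix (Fin (T + 1)) (Fin (T + 1)) ℝ,
      (∀ t s : Fin (T + 1), (A * Aᵀ) t s = C t s) ∧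
      (∀ t s : Fin (T + 1), (A' * A'ᵀ) t s = C t s) ∧
      ∀ u : Fin (T + 1), u.1 < T → A' u = (-1 : ℝ) ^ u.1 • A u := by
  obtain ⟨A, hA⟩ := hcav.exists_factor
  obtain ⟨A', hA'A, hodd, heven⟩ := A.exists_mul_transpose_self_eq_of_neg_rows
    (S := {u | u.1 < T ∧ u.1 % 2 = 1}) (S' := {u | u.1 < T ∧ u.1 % 2 = 0})
    fun u hu v hv => (hA u v).trans (hC u hu.1 v hv.1 (by rw [hu.2, hv.2]; decide))
  refine ⟨A, A', hA, fun t s => hA'A ▸ hA t s, fun u hu => ?_⟩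
  rcases Nat.mod_two_eq_zero_or_one u.1 with hpar | hpar
  · rw [heven u ⟨hu, hpar⟩, (Nat.even_iff.mpr hpar).neg_one_pow, one_smul]
  · rw [hodd u ⟨hu, hpar⟩, (Nat.odd_iff.mpr hpar).neg_one_pow, neg_one_smul]

section flipped

variable {A A' : Matrix (Fin (T + 1)) (Fin (T + 1)) ℝ}
  (hA : ∀ t s : Fin (T + 1), (A * Aᵀ) t s = C t s)
  (hA' : ∀ t s : Fin (T + 1), (A' * A'ᵀ) t s = C t s)
  (hflip : ∀ u : Fin (T + 1), u.1 < T → A' u = (-1 : ℝ) ^ u.1 • A u)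
  (hR : ∀ u < T, ∀ v < u, u % 2 = v % 2 → R u v = 0)
include hA hA' hflip hR

theorem corr_eq_zero_of_flipped_factors (hcav : IsCavityPair C R T) {t s : ℕ} (ht : t ≤ T)
    (hs : s ≤ T) (hts : t % 2 ≠ s % 2) : C t s = 0 := by
  obtain ⟨hC, -⟩ := hcav.2.2.2.2 A hA
  obtain ⟨hC', -⟩ := hcav.2.2.2.2 A' hA'
  have hsign : C t s = (-1) ^ (t + s) * C t s := calc
    C t s = ∫ ω, effTraj (T + 1) A' R (fun _ => 0) (!ω.1, ω.2) t *
        effTraj (T + 1) A' R (fun _ => 0) (!ω.1, ω.2) s ∂effMeasure (T + 1) := by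
      rw [integral_effMeasure_flip (T + 1) fun ω => effTraj (T + 1) A' R (fun _ => 0) ω t *
        effTraj (T + 1) A' R (fun _ => 0) ω s]
      exact hC' t ht s hs
    _ = ∫ ω, (-1) ^ (t + s) * (effTraj (T + 1) A R (fun _ => 0) ω t *
        effTraj (T + 1) A R (fun _ => 0) ω s) ∂effMeasure (T + 1) := by
      congr 1
      funext ω
      have hzero : ∀ u < T, (0 : ℝ) = (-1) ^ u * 0 := fun _ _ => (mul_zero _).symm
      rw [effTraj_flip hflip hzero hR ω t ht, effTraj_flip hflip hzero hR ω s hs]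
      ring
    _ = (-1) ^ (t + s) * C t s := by rw [integral_const_mul, hC t ht s hs]
  rw [(Nat.odd_iff.mpr (by omega) : Odd (t + s)).neg_one_pow] at hsign
  linarith

theorem resp_eq_zero_of_flipped_factors (hcav : IsCavityPair C R T) {s : ℕ} (hs : s < T)
    (hTs : T % 2 = s % 2) : R T s = 0 := by
  obtain ⟨-, hder⟩ := hcav.2.2.2.2 A hA
  obtain ⟨-, hder'⟩ := hcav.2.2.2.2 A' hA'
  set F : ℝ → ℝ := fun x => ∫ ω, effTraj (T + 1) A R (fun u => if u = s then x else 0) ω T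
    ∂effMeasure (T + 1)
  -- in the flipped picture a field `x` at site `s` acts as the field `(-1) ^ s * x`
  have hrel : (fun x => ∫ ω, effTraj (T + 1) A' R (fun u => if u = s then x else 0) ω T
      ∂effMeasure (T + 1)) = fun x => (-1) ^ (T + 1) * F ((-1) ^ s * x) := by
    funext x
    rw [← integral_effMeasure_flip, ← integral_const_mul]
    have hfield : ∀ u < T, (if u = s then x else 0) =
        (-1) ^ u * if u = s then (-1) ^ s * x else 0 := by
      intro u _
      split_ifs with hus
      · rw [hus, ← mul_assoc, ← pow_add, Even.neg_one_pow ⟨s, rfl⟩, one_mul]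
      · rw [mul_zero]
    simp_rw [effTraj_flip hflip hfield hR _ T le_rfl]
  have hscale : HasDerivAt (fun x : ℝ => (-1) ^ s * x) ((-1) ^ s) 0 := by
    simpa using (hasDerivAt_id (0 : ℝ)).const_mul ((-1 : ℝ) ^ s)
  have hF : HasDerivAt F (R T s) ((-1) ^ s * 0) := by
    rw [mul_zero]
    exact hder s T le_rfl hs
  have hsign : R T s = (-1) ^ (T + 1) * (R T s * (-1) ^ s) :=
    (hrel ▸ hder' s T le_rfl hs).unique ((hF.comp 0 hscale).const_mul _)
  rw [mul_left_comm, ← pow_add,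
    (Nat.odd_iff.mpr (by omega) : Odd (T + 1 + s)).neg_one_pow] at hsign
  linarith

end flipped

end IsCavityPair

theorem cavity_parity_lt (C R : ℕ → ℕ → ℝ) (hcav : ∀ T, IsCavityPair C R T) (n : ℕ) :
    (∀ t < n, ∀ s < n, t % 2 ≠ s % 2 → C t s = 0) ∧
      ∀ t < n, ∀ s < t, t % 2 = s % 2 → R t s = 0 := by
  induction n with
  | zero => exact ⟨fun t ht => absurd ht (Nat.not_lt_zero t),
      fun t ht => absurd ht (Nat.not_lt_zero t)⟩
  | succ T ih =>
    obtain ⟨hC, hR⟩ := ih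
    obtain ⟨A, A', hA, hA', hflip⟩ := (hcav T).exists_flipped_factors hC
    refine ⟨fun t ht s hs => (hcav T).corr_eq_zero_of_flipped_factors hA hA' hflip hR
        (Nat.lt_succ_iff.mp ht) (Nat.lt_succ_iff.mp hs), fun t ht s hs hts => ?_⟩
    rcases Nat.lt_succ_iff_lt_or_eq.mp ht with htT | rfl
    · exact hR t htT s hs hts
    · exact (hcav t).resp_eq_zero_of_flipped_factors hA hA' hflip hR hs hts

/-- parity structure of the cavity process: C(t,s) = 0 when t and s have
different parity, and R(t,s) = 0 (for s < t) when t and s have the same parity. -/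
theorem cavity_parity (C R : ℕ → ℕ → ℝ) (hcav : ∀ T, IsCavityPair C R T) :
    (∀ t s : ℕ, t % 2 ≠ s % 2 → C t s = 0) ∧
    (∀ t s : ℕ, s < t → t % 2 = s % 2 → R t s = 0) :=
  ⟨fun t s => (cavity_parity_lt C R hcav (max t s + 1)).1 t (by omega) s (by omega),
    fun t s hst => (cavity_parity_lt C R hcav (t + 1)).2 t (by omega) s hst⟩
end
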